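/- Let d ≥ 2, let e₁ be the first standard basis vector of R^d, let 0 < γ ≤ 1, 0 < α < γ, and 0 < ε ≤ α. Suppose v₁, …, v_m are unit vectors in R^{d−1} such that ⟨v_i, v_j⟩ < ε(γ² − εα)/(α(γ² − ε²)) for all i ≠ j. Set a = ε/γ and define w_t ∈ R^d by taking first coordinate a and remaining d−1 coordinates equal to √(1−a²)·v_t. Then each w_t is a unit vector satisfying ⟨w_t, γe₁⟩ = ε and ⟨w_t, −γe₁⟩ = −ε, and for all i ≠ t one has ⟨w_t, γe₁ − αw_i⟩ > 0 and ⟨w_t, −γe₁ + αw_i⟩ < 0. -/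

import Mathlib

open scoped RealInnerProductSpace

/-- the spherical-code construction.  If `v₁, …, v_m` are unit vectors in
`R^{d−1}` with pairwise inner products below `ε(γ²−εα)/(α(γ²−ε²))`, and `w_t ∈ R^d` has
first coordinate `a = ε/γ` and remaining coordinates `√(1−a²)·v_t`, then each `w_t` is a
unit vector with `⟪w_t, γe₁⟫ = ε`, `⟪w_t, −γe₁⟫ = −ε`, and for `i ≠ t`,
`⟪w_t, γe₁ − αw_i⟫ > 0` and `⟪w_t, −γe₁ + αw_i⟫ < 0`. -/
theorem spherical_code_small_margin_separators
    (d : ℕ) (hd : 2 ≤ d) (γ α ε : ℝ)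
    (hγ0 : 0 < γ) (hγ1 : γ ≤ 1) (hα0 : 0 < α) (hαγ : α < γ) (hε0 : 0 < ε) (hεα : ε ≤ α)
    (m : ℕ) (v : Fin m → EuclideanSpace ℝ (Fin (d - 1)))
    (hv : ∀ i, ‖v i‖ = 1)
    (hcode : ∀ i j, i ≠ j → ⟪v i, v j⟫ < ε * (γ ^ 2 - ε * α) / (α * (γ ^ 2 - ε ^ 2)))
    (w : Fin m → EuclideanSpace ℝ (Fin d))
    (hwfirst : ∀ t, w t ⟨0, by omega⟩ = ε / γ)
    (hwrest : ∀ t, ∀ j : Fin (d - 1),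
      w t ⟨j.1 + 1, by have := j.isLt; omega⟩ = Real.sqrt (1 - (ε / γ) ^ 2) * v t j) :
    ∀ t : Fin m, ‖w t‖ = 1 ∧
      ⟪w t, γ • (EuclideanSpace.single (⟨0, by omega⟩ : Fin d) (1 : ℝ))⟫ = ε ∧
      ⟪w t, -(γ • (EuclideanSpace.single (⟨0, by omega⟩ : Fin d) (1 : ℝ)))⟫ = -ε ∧
      ∀ i : Fin m, i ≠ t →
        0 < ⟪w t, γ • (EuclideanSpace.single (⟨0, by omega⟩ : Fin d) (1 : ℝ)) - α • w i⟫ ∧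
        ⟪w t, -(γ • (EuclideanSpace.single (⟨0, by omega⟩ : Fin d) (1 : ℝ))) + α • w i⟫ < 0 := by
  obtain ⟨n, rfl⟩ : ∃ n, d = n + 1 := ⟨d - 1, by omega⟩
  simp only [Fin.mk_zero]
  have hγne : γ ≠ 0 := ne_of_gt hγ0
  have hεγ : ε < γ := lt_of_le_of_lt hεα hαγ
  have ha0 : 0 < ε / γ := div_pos hε0 hγ0
  have ha1 : ε / γ < 1 := (div_lt_one hγ0).2 hεγ
  have hs2 : Real.sqrt (1 - (ε / γ) ^ 2) ^ 2 = 1 - (ε / γ) ^ 2 :=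
    Real.sq_sqrt (by nlinarith)
  have hs2pos : (0:ℝ) < 1 - (ε / γ) ^ 2 := by nlinarith
  have hw0 : ∀ t, w t 0 = ε / γ := hwfirst
  have hwj : ∀ t (j : Fin n), w t j.succ = Real.sqrt (1 - (ε / γ) ^ 2) * v t j :=
    fun t j => hwrest t j
  have key : ∀ t i : Fin m,
      ⟪w t, w i⟫ = (ε / γ) ^ 2 + (1 - (ε / γ) ^ 2) * ⟪v t, v i⟫ := by
    intro t i
    simp only [PiLp.inner_apply, RCLike.inner_apply, conj_trivial]
    rw [Fin.sum_univ_succ]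
    simp_rw [hw0, hwj]
    rw [Finset.mul_sum]
    congr 1
    · ring
    · exact Finset.sum_congr rfl fun j _ => by
        linear_combination v t j * v i j * hs2
  have keyE : ∀ t : Fin m,
      ⟪w t, γ • (EuclideanSpace.single (0 : Fin (n+1)) (1 : ℝ))⟫ = ε := by
    intro t
    rw [inner_smul_right, EuclideanSpace.inner_single_right]
    simp only [conj_trivial, hw0, one_mul]
    field_simp
  intro t
  have hnorm : ‖w t‖ = 1 := by
    have h1 : ⟪v t, v t⟫ = 1 := by
      rw [real_inner_self_eq_norm_sq, hv t]; norm_num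
    have h2 : ⟪w t, w t⟫ = 1 := by rw [key t t, h1]; ring
    rw [real_inner_self_eq_norm_sq] at h2
    nlinarith [norm_nonneg (w t)]
  have hB : ∀ i : Fin m, i ≠ t →
      0 < ε - α * ((ε / γ) ^ 2 + (1 - (ε / γ) ^ 2) * ⟪v t, v i⟫) := by
    intro i hit
    have hc := hcode t i (Ne.symm hit)
    have hγε : (0:ℝ) < γ ^ 2 - ε ^ 2 := by nlinarith
    have hid : α * (1 - (ε / γ) ^ 2) * (ε * (γ ^ 2 - ε * α) / (α * (γ ^ 2 - ε ^ 2)))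
        = ε - α * (ε / γ) ^ 2 := by
      field_simp
    nlinarith [mul_pos (mul_pos hα0 hs2pos)
      (sub_pos.2 hc)]
  refine ⟨hnorm, keyE t, ?_, ?_⟩
  · rw [inner_neg_right, keyE t]
  · intro i hit
    have hpos : 0 < ⟪w t,
        γ • (EuclideanSpace.single (0 : Fin (n+1)) (1 : ℝ)) - α • w i⟫ := by
      rw [inner_sub_right, keyE t, inner_smul_right, key t i]
      have := hB i hit
      linarith
    refine ⟨hpos, ?_⟩
    have heq : -(γ • (EuclideanSpace.single (0 : Fin (n+1)) (1 : ℝ))) + α • w i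
        = -(γ • (EuclideanSpace.single (0 : Fin (n+1)) (1 : ℝ)) - α • w i) := by
      abel
    rw [heq, inner_neg_right]
    linarith
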